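/- arXiv:2409.13009 — 2 statements merged into one kernel-verified Lean document; each statement's English description precedes it below -/
import Mathlib

section
/- Let ρ be a Hermitian matrix on a bipartite system. Then for every natural number k ≥ 1, the 2k-th moment of the partial transpose equals the k-th moment of the Choi reduced matrix: Tr((ρ^{T_B})^{2k}) = Tr((ρ^{(2)})^k). In particular (k = 1), Tr((ρ^{T_B})²) = Tr(ρ^{(2)}) = Tr(ρ²). -/
open Matrix ComplexOrder

/-- The partial transpose on the second factor of a bipartite system. -/
def partialTranspose {α β : Type*} (ρ : Matrix (α × β) (α × β) ℂ) :
    Matrix (α × β) (α × β) ℂ :=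
  fun p q => ρ (p.1, q.2) (q.1, p.2)

/-- The Choi reduced matrix `ρ^{(2)}` of `ρ`. -/
noncomputable def choiReduced {α β : Type*} [Fintype α] [Fintype β]
    (ρ : Matrix (α × β) (α × β) ℂ) : Matrix (α × β) (α × β) ℂ :=
  fun p q => ∑ i' : α, ∑ m : β, ρ (p.1, m) (i', p.2) * star (ρ (q.1, m) (i', q.2))

/-!
Summing over the pair `(i', m)` exhibits `ρ^{(2)}` as the Gram matrix `ρ^{T_B} (ρ^{T_B})ᴴ`.
The partial transpose commutes with `ᴴ`, so for Hermitian `ρ` this is `(ρ^{T_B})²`, and both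
moment identities follow; `Tr(ρ^{T_B} σ^{T_B}) = Tr(ρ σ)` because `((i,j'),(i',j)) ↦ ((i,j),(i',j'))`
is a bijection of the summation range.
-/

section

variable {α β : Type*}

lemma conjTranspose_partialTranspose (ρ : Matrix (α × β) (α × β) ℂ) :
    (partialTranspose ρ)ᴴ = partialTranspose ρᴴ :=
  rfl

lemma Matrix.IsHermitian.partialTranspose {ρ : Matrix (α × β) (α × β) ℂ} (hρ : ρ.IsHermitian) :
    (_root_.partialTranspose ρ).IsHermitian := by
  rw [IsHermitian, conjTranspose_partialTranspose, hρ]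

variable [Fintype α] [Fintype β]

lemma choiReduced_eq_mul_conjTranspose (ρ : Matrix (α × β) (α × β) ℂ) :
    choiReduced ρ = partialTranspose ρ * (partialTranspose ρ)ᴴ := by
  ext p q
  simp only [choiReduced, mul_apply, conjTranspose_apply, partialTranspose,
    Fintype.sum_prod_type]

lemma trace_partialTranspose_mul_partialTranspose (ρ σ : Matrix (α × β) (α × β) ℂ) :
    (partialTranspose ρ * partialTranspose σ).trace = (ρ * σ).trace := by
  simp only [trace, diag_apply, mul_apply, partialTranspose, Fintype.sum_prod_type]
  refine Finset.sum_congr rfl fun i _ => ?_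
  rw [Finset.sum_comm]
  conv_rhs => rw [Finset.sum_comm]
  refine Finset.sum_congr rfl fun i' _ => ?_
  rw [Finset.sum_comm]

lemma Matrix.IsHermitian.choiReduced_eq_sq [DecidableEq α] [DecidableEq β]
    {ρ : Matrix (α × β) (α × β) ℂ} (hρ : ρ.IsHermitian) :
    choiReduced ρ = _root_.partialTranspose ρ ^ 2 := by
  rw [choiReduced_eq_mul_conjTranspose, hρ.partialTranspose.eq, sq]

end

/-- For a Hermitian `ρ` and every `k ≥ 1`,
`Tr((ρ^{T_B})^{2k}) = Tr((ρ^{(2)})^k)`; in particular (`k = 1`),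
`Tr((ρ^{T_B})²) = Tr(ρ^{(2)}) = Tr(ρ²)`. -/
theorem trace_partialTranspose_pow_eq {α β : Type*} [Fintype α] [Fintype β]
    [DecidableEq α] [DecidableEq β]
    (ρ : Matrix (α × β) (α × β) ℂ) (hρ : ρ.IsHermitian) :
    (∀ k : ℕ, 1 ≤ k →
      (partialTranspose ρ ^ (2 * k)).trace = (choiReduced ρ ^ k).trace) ∧
    (partialTranspose ρ ^ 2).trace = (choiReduced ρ).trace ∧
    (choiReduced ρ).trace = (ρ * ρ).trace := by
  rw [hρ.choiReduced_eq_sq]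
  refine ⟨fun k _ => by rw [← pow_mul], rfl, ?_⟩
  rw [sq, trace_partialTranspose_mul_partialTranspose]
end

section
/- Let p : ℝ → ℝ → ℝ and t > 0. Assume that for every (A₁, A₂) ∈ ℝ² there exist s₁, s₂ ∈ ℝ with s₁ + s₂ = A₁ + A₂ and p A₁ A₂ ≤ (p s₁ s₁ + p s₂ s₂)/2. Then for every (A₁, A₂) there exists s ∈ ℝ such that p A₁ A₂ + t·(A₁ + A₂)/2 ≤ p s s + t·s; consequently, the supremum of (A₁,A₂) ↦ p A₁ A₂ + t·(A₁ + A₂)/2 over ℝ² equals its supremum over the diagonal A₁ = A₂, and coincides with the supremum of (A₁,A₂) ↦ p A₁ A₂ + t·min A₁ A₂. -/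
/-!
Averaging the splitting bound over `s₁, s₂` bounds `p A₁ A₂ + t (A₁ + A₂)/2` by the mean of the
diagonal values `p sᵢ sᵢ + t sᵢ`, hence by the larger of the two. Thus every off-diagonal value of
the half-tension functional is dominated by a diagonal one, where it agrees with the maximin
functional; conversely `t · min A₁ A₂ ≤ t (A₁ + A₂)/2` for `t ≥ 0`.
-/

/-- Unlike `ciSup_mono`, this needs no boundedness: in `ℝ` both sides are then the junk value `0`. -/
theorem ciSup_eq_ciSup_of_forall_exists_le {α ι κ : Type*} [ConditionallyCompleteLinearOrder α]
    {f : ι → α} {g : κ → α} (hf : ∀ i, ∃ j, f i ≤ g j) (hg : ∀ j, ∃ i, g j ≤ f i) :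
    ⨆ i, f i = ⨆ j, g j :=
  csSup_eq_csSup_of_forall_exists_le
    (by simpa only [Set.forall_mem_range, Set.exists_range_iff] using hf)
    (by simpa only [Set.forall_mem_range, Set.exists_range_iff] using hg)

theorem mul_min_le_mul_add_div_two {t : ℝ} (ht : 0 ≤ t) (a b : ℝ) :
    t * min a b ≤ t * (a + b) / 2 := by
  nlinarith [min_le_left a b, min_le_right a b]

theorem exists_diag_ge_of_splitting (p : ℝ → ℝ → ℝ) (t : ℝ) {A₁ A₂ s₁ s₂ : ℝ}
    (hs : s₁ + s₂ = A₁ + A₂) (hp : p A₁ A₂ ≤ (p s₁ s₁ + p s₂ s₂) / 2) :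
    ∃ s, p A₁ A₂ + t * (A₁ + A₂) / 2 ≤ p s s + t * s := by
  have h_avg : p A₁ A₂ + t * (A₁ + A₂) / 2 ≤ ((p s₁ s₁ + t * s₁) + (p s₂ s₂ + t * s₂)) / 2 := by
    rw [← hs]
    linarith
  rcases le_total (p s₁ s₁ + t * s₁) (p s₂ s₂ + t * s₂) with h₁₂ | h₂₁
  · exact ⟨s₂, by linarith⟩
  · exact ⟨s₁, by linarith⟩

/-- If `p` satisfies the splitting bound
`p A₁ A₂ ≤ (p s₁ s₁ + p s₂ s₂)/2` for some `s₁ + s₂ = A₁ + A₂`, and `t > 0`,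
then every value of the averaged (half-tension) functional
`(A₁,A₂) ↦ p A₁ A₂ + t·(A₁ + A₂)/2` is dominated by a value on the diagonal;
hence its supremum over `ℝ²` equals the supremum over the diagonal `A₁ = A₂`,
and coincides with the supremum of the maximin functional
`(A₁,A₂) ↦ p A₁ A₂ + t·min A₁ A₂`. -/
theorem half_tension_on_diagonal (p : ℝ → ℝ → ℝ) (t : ℝ) (ht : 0 < t)
    (h : ∀ A₁ A₂ : ℝ, ∃ s₁ s₂ : ℝ, s₁ + s₂ = A₁ + A₂ ∧
      p A₁ A₂ ≤ (p s₁ s₁ + p s₂ s₂) / 2) :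
    (∀ A₁ A₂ : ℝ, ∃ s : ℝ, p A₁ A₂ + t * (A₁ + A₂) / 2 ≤ p s s + t * s) ∧
    (⨆ q : ℝ × ℝ, (p q.1 q.2 + t * (q.1 + q.2) / 2)) = (⨆ s : ℝ, (p s s + t * s)) ∧
    (⨆ q : ℝ × ℝ, (p q.1 q.2 + t * (q.1 + q.2) / 2)) =
      ⨆ q : ℝ × ℝ, (p q.1 q.2 + t * min q.1 q.2) := by
  have dominated (A₁ A₂ : ℝ) : ∃ s, p A₁ A₂ + t * (A₁ + A₂) / 2 ≤ p s s + t * s := by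
    obtain ⟨s₁, s₂, hs, hp⟩ := h A₁ A₂
    exact exists_diag_ge_of_splitting p t hs hp
  refine ⟨dominated, ?_, ?_⟩
  · exact ciSup_eq_ciSup_of_forall_exists_le (fun q ↦ dominated q.1 q.2) fun s ↦
      ⟨(s, s), le_of_eq (by ring)⟩
  · refine ciSup_eq_ciSup_of_forall_exists_le (fun q ↦ ?_) fun q ↦ ⟨q, ?_⟩
    · obtain ⟨s, hs⟩ := dominated q.1 q.2
      exact ⟨(s, s), by simpa only [min_self] using hs⟩
    · linarith [mul_min_le_mul_add_div_two ht.le q.1 q.2]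
end
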